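/- arXiv:2008.10983 — 2 statements merged into one kernel-verified Lean document; each statement's English description precedes it below -/
import Mathlib

section
/- Let g(s) be a strictly proper real rational function with no poles on the imaginary axis, at least one pole with positive real part, and an odd total number (counted with multiplicity) of poles with positive real part. Then ρ*(g) ≥ 1/|g(0)|; equivalently, every proper stable real rational δ(s) that internally stabilizes g under positive feedback satisfies ‖δ‖_{H∞} ≥ 1/|g(0)|. -/
/-!
For a real polynomial `p` without roots on the imaginary axis, `p(0) = lc(p) · ∏ (-r)` over its
complex roots. Non-real roots come in conjugate pairs contributing `|r|² > 0`, so
`sign p(0) = (-1)^k · sign lc(p)`, where `k` counts the roots in the open right half plane.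

Apply this to `a` (stable, `k = 0`), to `d` (`k` odd) and to the characteristic polynomial
`χ = a d - b n` (stable), whose leading coefficient is `lc(a) lc(d)` because `g` is strictly
proper. With `L = lc(a) lc(d)` this gives `L a(0) d(0) < 0 < L χ(0)`, hence
`L b(0) n(0) < L a(0) d(0) < 0`, i.e. `|δ(0) g(0)| > 1`; and `|δ(0)| ≤ ‖δ‖_{H∞}`.
-/

open Polynomial

/-- Evaluation of the real rational function `n/d` at a complex argument. -/
noncomputable def ratEval (n d : Polynomial ℝ) (s : ℂ) : ℂ :=
  (n.map (algebraMap ℝ ℂ)).eval s / (d.map (algebraMap ℝ ℂ)).eval s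

/-- All complex poles of `δ = b/a` (i.e. roots of `a`) have negative real part. -/
def StableRat (a : Polynomial ℝ) : Prop :=
  ∀ z : ℂ, (a.map (algebraMap ℝ ℂ)).eval z = 0 → z.re < 0

/-- `δ = b/a` is a proper stable real rational function that internally stabilizes
`g = n/d` under positive feedback: every root of `a d − b n` has negative real part. -/
def Stabilizes (b a n d : Polynomial ℝ) : Prop :=
  a ≠ 0 ∧ IsCoprime b a ∧ b.degree ≤ a.degree ∧ StableRat a ∧
    ∀ z : ℂ, ((a * d - b * n).map (algebraMap ℝ ℂ)).eval z = 0 → z.re < 0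

/-- `sup_{ω ∈ ℝ} |g(iω)|` for `g = n/d`. -/
noncomputable def hinfNorm (n d : Polynomial ℝ) : ℝ :=
  ⨆ ω : ℝ, ‖ratEval n d (ω * Complex.I)‖

/-- Number of poles (roots of `d`), with multiplicity, in the open right half plane. -/
noncomputable def orhpCount (d : Polynomial ℝ) : ℕ :=
  Multiset.card ((d.map (algebraMap ℝ ℂ)).roots.filter (fun z => 0 < z.re))

/-- Robust instability radius of `g = n/d`: infimum of `‖δ‖_{H∞}` over `δ ∈ S(g)`
(`+∞` if `S(g)` is empty). -/
noncomputable def RIR (n d : Polynomial ℝ) : ENNReal :=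
  sInf { r : ENNReal | ∃ b a : Polynomial ℝ,
    Stabilizes b a n d ∧ r = ENNReal.ofReal (hinfNorm b a) }

/-- `μ(e)` : infimum of `‖δ‖_{H∞}` over `δ ∈ S(g)` with `δ(0) = e`. -/
noncomputable def Mu (n d : Polynomial ℝ) (e : ℝ) : ENNReal :=
  sInf { r : ENNReal | ∃ b a : Polynomial ℝ,
    Stabilizes b a n d ∧ b.eval 0 / a.eval 0 = e ∧ r = ENNReal.ofReal (hinfNorm b a) }

/-- The characteristic polynomial `chp` achieves `ω_c`-stability: simple root at `iω_c`
(and at `−iω_c` when `ω_c ≠ 0`), all other roots with negative real part. -/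
def OmegaStable (chp : Polynomial ℝ) (ωc : ℝ) : Prop :=
  Polynomial.rootMultiplicity ((ωc : ℂ) * Complex.I) (chp.map (algebraMap ℝ ℂ)) = 1 ∧
  (ωc ≠ 0 → Polynomial.rootMultiplicity (-((ωc : ℂ) * Complex.I)) (chp.map (algebraMap ℝ ℂ)) = 1) ∧
  ∀ z : ℂ, (chp.map (algebraMap ℝ ℂ)).eval z = 0 →
    z ≠ (ωc : ℂ) * Complex.I → z ≠ -((ωc : ℂ) * Complex.I) → z.re < 0

open ComplexConjugate Asymptotics Bornology Filter

theorem Multiset.map_conj_filter {M : Multiset ℂ} (hM : M.map conj = M) (q : ℂ → Prop)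
    [DecidablePred q] : (M.filter q).map conj = M.filter (fun z => q (conj z)) := by
  conv_rhs => rw [← hM]
  rw [Multiset.filter_map]
  simp

theorem exists_pos_eq_prod_of_map_conj_eq {M : Multiset ℂ} (hM : M.map conj = M)
    (hre : ∀ z ∈ M, 0 < z.re) : ∃ x : ℝ, 0 < x ∧ M.prod = x := by
  classical
  set U := M.filter (fun z => 0 < z.im)
  set R := M.filter (fun z => z.im = 0)
  have hlower : U.map conj = M.filter (fun z => z.im < 0) := by
    rw [Multiset.map_conj_filter hM]
    simp
  have hsplit : M = U + R + U.map conj := by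
    rw [hlower]
    ext z
    simp only [Multiset.count_add, Multiset.count_filter, U, R]
    split_ifs <;> first | (exfalso; order) | simp
  have hR : R.prod = ((R.map Complex.re).prod : ℝ) := by
    rw [← Complex.ofRealHom_eq_coe, map_multiset_prod, Multiset.map_map]
    conv_lhs => rw [← Multiset.map_id R]
    exact congrArg _ (Multiset.map_congr rfl fun z hz =>
      Complex.ext (by simp) (by simpa using (Multiset.mem_filter.mp hz).2))
  have hU : U.prod ≠ 0 := Multiset.prod_ne_zero fun h0 =>
    (hre 0 (Multiset.mem_of_mem_filter h0)).ne' rfl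
  refine ⟨Complex.normSq U.prod * (R.map Complex.re).prod,
    mul_pos (Complex.normSq_pos.mpr hU) (Multiset.prod_pos fun x hx => ?_), ?_⟩
  · obtain ⟨z, hz, rfl⟩ := Multiset.mem_map.mp hx
    exact hre z (Multiset.mem_of_mem_filter hz)
  · rw [hsplit, Multiset.prod_add, Multiset.prod_add, ← map_multiset_prod, hR,
      Complex.ofReal_mul, Complex.normSq_eq_conj_mul_self]
    ring

theorem Polynomial.roots_map_ofReal_map_conj (p : ℝ[X]) :
    (p.map (algebraMap ℝ ℂ)).roots.map conj = (p.map (algebraMap ℝ ℂ)).roots := by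
  have hconj : (p.map (algebraMap ℝ ℂ)).map conj = p.map (algebraMap ℝ ℂ) := by
    rw [Polynomial.map_map]
    exact congrArg (p.map ·) (RingHom.ext fun x => Complex.conj_ofReal x)
  rw [← (IsAlgClosed.splits _).roots_map, hconj]

theorem exists_pos_eval_zero_eq_neg_one_pow_orhpCount {p : ℝ[X]}
    (hp : ∀ ω : ℝ, (p.map (algebraMap ℝ ℂ)).eval (ω * Complex.I) ≠ 0) :
    ∃ x : ℝ, 0 < x ∧ p.eval 0 = (-1) ^ orhpCount p * x * p.leadingCoeff := by
  classical
  set P := p.map (algebraMap ℝ ℂ)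
  have hP : P ≠ 0 := fun h => hp 0 (by rw [h, eval_zero])
  have hroots : P.roots.map conj = P.roots := p.roots_map_ofReal_map_conj
  set rp := P.roots.filter (fun z => 0 < z.re)
  set rm := P.roots.filter (fun z => ¬ 0 < z.re)
  obtain ⟨xp, hxp, hprodp⟩ := exists_pos_eq_prod_of_map_conj_eq (M := rp)
    (by rw [Multiset.map_conj_filter hroots]; simp [rp])
    (fun z hz => (Multiset.mem_filter.mp hz).2)
  obtain ⟨xm, hxm, hprodm⟩ := exists_pos_eq_prod_of_map_conj_eq (M := rm.map Neg.neg)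
    (by rw [Multiset.map_map, show (conj ∘ Neg.neg : ℂ → ℂ) = Neg.neg ∘ conj from
          funext fun z => map_neg conj z, ← Multiset.map_map, Multiset.map_conj_filter hroots]
        simp [rm])
    (fun z hz => by
      obtain ⟨w, hw, rfl⟩ := Multiset.mem_map.mp hz
      obtain ⟨hwP, hwre⟩ := Multiset.mem_filter.mp hw
      have hw0 : w.re ≠ 0 := fun h0 => hp w.im <| by
        rwa [show (w.im : ℂ) * Complex.I = w from Complex.ext (by simp [h0]) (by simp),
          ← IsRoot, ← mem_roots hP]
      simp only [Complex.neg_re, neg_pos]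
      exact lt_of_le_of_ne (not_lt.mp hwre) hw0)
  refine ⟨xp * xm, mul_pos hxp hxm, Complex.ofReal_injective ?_⟩
  have hP0 : P.eval 0 = ((p.eval 0 : ℝ) : ℂ) := eval_zero_map _ _
  rw [← hP0, (IsAlgClosed.splits P).eval_eq_prod_roots,
    ← Multiset.filter_add_not (fun z => 0 < z.re) P.roots, Multiset.map_add, Multiset.prod_add]
  simp only [zero_sub]
  have hcard : Multiset.card rp = orhpCount p := rfl
  rw [Multiset.prod_map_neg, hcard, hprodp, hprodm,
    leadingCoeff_map_of_injective (algebraMap ℝ ℂ).injective, Complex.coe_algebraMap]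
  push_cast
  ring

theorem neg_one_pow_orhpCount_mul_leadingCoeff_mul_eval_zero_pos {p : ℝ[X]}
    (hp : ∀ ω : ℝ, (p.map (algebraMap ℝ ℂ)).eval (ω * Complex.I) ≠ 0) :
    0 < (-1) ^ orhpCount p * p.leadingCoeff * p.eval 0 := by
  obtain ⟨x, hx, heval⟩ := exists_pos_eval_zero_eq_neg_one_pow_orhpCount hp
  have hL : p.leadingCoeff ≠ 0 := leadingCoeff_ne_zero.mpr fun h => hp 0 (by simp [h])
  have hsL : (-1 : ℝ) ^ orhpCount p * p.leadingCoeff ≠ 0 := by positivity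
  rw [heval, show (-1 : ℝ) ^ orhpCount p * p.leadingCoeff * ((-1) ^ orhpCount p * x *
    p.leadingCoeff) = ((-1) ^ orhpCount p * p.leadingCoeff) ^ 2 * x by ring]
  positivity

namespace StableRat

variable {p : ℝ[X]}

theorem eval_ofReal_mul_I_ne_zero (hp : StableRat p) (ω : ℝ) :
    (p.map (algebraMap ℝ ℂ)).eval (ω * Complex.I) ≠ 0 :=
  fun h => by simpa using hp _ h

theorem orhpCount_eq_zero (hp : StableRat p) : orhpCount p = 0 := by
  rw [orhpCount, Multiset.card_eq_zero, Multiset.filter_eq_nil]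
  exact fun z hz => not_lt.mpr (hp z (mem_roots'.mp hz).2).le

theorem leadingCoeff_mul_eval_zero_pos (hp : StableRat p) : 0 < p.leadingCoeff * p.eval 0 := by
  simpa [hp.orhpCount_eq_zero] using
    neg_one_pow_orhpCount_mul_leadingCoeff_mul_eval_zero_pos hp.eval_ofReal_mul_I_ne_zero

end StableRat

theorem Stabilizes.abs_eval_zero_mul_lt {b a n d : ℝ[X]} (hstab : Stabilizes b a n d)
    (hsp : n.degree < d.degree)
    (hd : ∀ ω : ℝ, (d.map (algebraMap ℝ ℂ)).eval (ω * Complex.I) ≠ 0)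
    (hodd : Odd (orhpCount d)) :
    |a.eval 0 * d.eval 0| < |b.eval 0 * n.eval 0| := by
  obtain ⟨ha, -, hba, hastab, hχstab⟩ := hstab
  have hχstab : StableRat (a * d - b * n) := hχstab
  have hlead : (a * d - b * n).leadingCoeff = a.leadingCoeff * d.leadingCoeff := by
    rw [leadingCoeff_sub_of_degree_lt, leadingCoeff_mul]
    calc (b * n).degree = b.degree + n.degree := degree_mul
      _ ≤ a.degree + n.degree := add_le_add_left hba _
      _ < a.degree + d.degree := WithBot.add_lt_add_left (degree_ne_bot.mpr ha) hsp
      _ = (a * d).degree := degree_mul.symm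
  have hA := hastab.leadingCoeff_mul_eval_zero_pos
  have hD := neg_one_pow_orhpCount_mul_leadingCoeff_mul_eval_zero_pos hd
  have hχ := hχstab.leadingCoeff_mul_eval_zero_pos
  rw [hodd.neg_one_pow] at hD
  rw [hlead, eval_sub, eval_mul, eval_mul] at hχ
  set L := a.leadingCoeff * d.leadingCoeff
  have had : L * (a.eval 0 * d.eval 0) < 0 := by nlinarith
  have hbn : L * (b.eval 0 * n.eval 0) < L * (a.eval 0 * d.eval 0) := by linarith
  refine lt_of_mul_lt_mul_left ?_ (abs_nonneg L)
  rw [← abs_mul, ← abs_mul, abs_of_neg had, abs_of_neg (hbn.trans had)]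
  linarith

theorem tendsto_ofReal_mul_I_cocompact :
    Tendsto (fun ω : ℝ => (ω : ℂ) * Complex.I) (cocompact ℝ) (cobounded ℂ) := by
  rw [← Metric.cobounded_eq_cocompact, ← tendsto_norm_atTop_iff_cobounded]
  simpa only [norm_mul, Complex.norm_I, mul_one, Complex.norm_real] using
    tendsto_norm_cobounded_atTop (E := ℝ)

theorem bddAbove_range_norm_ratEval_ofReal_mul_I {n d : ℝ[X]} (hdeg : n.degree ≤ d.degree)
    (hd : ∀ ω : ℝ, (d.map (algebraMap ℝ ℂ)).eval (ω * Complex.I) ≠ 0) :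
    BddAbove (Set.range fun ω : ℝ => ‖ratEval n d (ω * Complex.I)‖) := by
  have hcont : Continuous fun ω : ℝ => ratEval n d (ω * Complex.I) := by
    unfold ratEval
    fun_prop (disch := exact hd _)
  have hNO : (fun ω : ℝ => (n.map (algebraMap ℝ ℂ)).eval (ω * Complex.I)) =O[cocompact ℝ]
      fun ω : ℝ => (d.map (algebraMap ℝ ℂ)).eval (ω * Complex.I) :=
    (isBigO_cobounded_of_degree_le (by simpa using hdeg)).comp_tendsto
      tendsto_ofReal_mul_I_cocompact
  have hbounded :
      (fun ω : ℝ => ratEval n d (ω * Complex.I)) =O[cocompact ℝ] (1 : ℝ → ℝ) := by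
    obtain ⟨c, hc⟩ := isBigO_iff.mp hNO
    refine isBigO_iff.mpr ⟨c, hc.mono fun ω hω => ?_⟩
    rw [ratEval, norm_div, Pi.one_apply, norm_one, mul_one]
    exact (div_le_iff₀ (norm_pos_iff.mpr (hd ω))).mpr hω
  obtain ⟨C, hC⟩ := (hcont.isBounded_range_iff_isBigO.mpr hbounded).exists_norm_le
  exact ⟨C, by rintro _ ⟨ω, rfl⟩; exact hC _ ⟨ω, rfl⟩⟩

theorem abs_div_eval_zero_le_hinfNorm {n d : ℝ[X]} (hdeg : n.degree ≤ d.degree)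
    (hd : ∀ ω : ℝ, (d.map (algebraMap ℝ ℂ)).eval (ω * Complex.I) ≠ 0) :
    |n.eval 0 / d.eval 0| ≤ hinfNorm n d := by
  have h := le_ciSup (bddAbove_range_norm_ratEval_ofReal_mul_I hdeg hd) 0
  have h0 : ‖ratEval n d ((0 : ℝ) * Complex.I)‖ = |n.eval 0 / d.eval 0| := by
    rw [Complex.ofReal_zero, zero_mul, ratEval, eval_zero_map, eval_zero_map, ← map_div₀,
      Complex.coe_algebraMap, Complex.norm_real, Real.norm_eq_abs]
  exact h0 ▸ h

theorem stmt1_general (n d : Polynomial ℝ)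
    (hsp : n.degree < d.degree)
    (hnoimag : ∀ ω : ℝ, (d.map (algebraMap ℝ ℂ)).eval ((ω : ℂ) * Complex.I) ≠ 0)
    (hodd : Odd (orhpCount d))
    (b a : Polynomial ℝ) (hstab : Stabilizes b a n d) :
    1 / |n.eval 0 / d.eval 0| ≤ hinfNorm b a := by
  have hkey := hstab.abs_eval_zero_mul_lt hsp hnoimag hodd
  have hastab : StableRat a := hstab.2.2.2.1
  have ha0 : a.eval 0 ≠ 0 := fun h => by
    simpa [h] using hastab.leadingCoeff_mul_eval_zero_pos
  have hn0 : n.eval 0 ≠ 0 := fun h =>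
    (abs_nonneg (a.eval 0 * d.eval 0)).not_gt (by simpa [h] using hkey)
  rw [abs_mul, abs_mul] at hkey
  calc 1 / |n.eval 0 / d.eval 0| = |d.eval 0| / |n.eval 0| := by rw [abs_div, one_div_div]
    _ ≤ |b.eval 0| / |a.eval 0| :=
      (div_le_div_iff₀ (abs_pos.mpr hn0) (abs_pos.mpr ha0)).mpr (by linarith)
    _ = |b.eval 0 / a.eval 0| := (abs_div _ _).symm
    _ ≤ hinfNorm b a := abs_div_eval_zero_le_hinfNorm hstab.2.2.1 hastab.eval_ofReal_mul_I_ne_zero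

/-- if moreover `g` has an odd number (with multiplicity) of ORHP
poles, then every `δ ∈ S(g)` satisfies `‖δ‖_{H∞} ≥ 1/|g(0)|`. -/
theorem stmt1 (n d : Polynomial ℝ) (hd : d ≠ 0) (hcop : IsCoprime n d)
    (hsp : n.degree < d.degree)
    (hnoimag : ∀ ω : ℝ, (d.map (algebraMap ℝ ℂ)).eval ((ω : ℂ) * Complex.I) ≠ 0)
    (hunst : ∃ z : ℂ, (d.map (algebraMap ℝ ℂ)).eval z = 0 ∧ 0 < z.re)
    (hodd : Odd (orhpCount d))
    (b a : Polynomial ℝ) (hstab : Stabilizes b a n d) :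
    1 / |n.eval 0 / d.eval 0| ≤ hinfNorm b a :=
  stmt1_general n d hsp hnoimag hodd b a hstab
end

section
/- Let g(s) = (ζs − k)/(s³ + ps² + qs + ℓ) with real parameters ζ, k, p, q, ℓ, where k ≠ 0, ℓ ≠ 0, and the numerator and denominator are coprime. Then the following are equivalent: (A) the denominator s³ + ps² + qs + ℓ has an odd number (with multiplicity) of roots with positive real part, and the constant perturbation δ₀ = 1/g(0) = −ℓ/k yields the closed-loop characteristic polynomial s³ + ps² + (q + ζℓ/k)s, which has a simple root at 0 and two roots with negative real part; (B) p > 0, ℓ < 0, and q + ζℓ/k > 0. Moreover, under (B), the robust instability radius is exactly ρ*(g) = 1/|g(0)| = |ℓ/k|. -/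
open Polynomial

/-- Numerator `ζs − k` of the third order transfer function. -/
noncomputable def numer3 (ζ k : ℝ) : Polynomial ℝ :=
  Polynomial.C ζ * Polynomial.X - Polynomial.C k

/-- Denominator `s³ + ps² + qs + ℓ` of the third order transfer function. -/
noncomputable def denom3 (p q ℓ : ℝ) : Polynomial ℝ :=
  Polynomial.X ^ 3 + Polynomial.C p * Polynomial.X ^ 2 + Polynomial.C q * Polynomial.X +
    Polynomial.C ℓ

/-!
Factor the denominator over `ℝ` as `(s - r)(s² + βs + γ)`, so that `ℓ = -rγ`. The roots of the
quadratic are either real with product `γ`, or complex conjugate with equal real parts; hence the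
number of poles in the open right half plane is odd exactly when `[r > 0] + [γ < 0]` is, that is,
when `rγ > 0`. With `δ₀ = -ℓ/k` the characteristic polynomial is `s(s² + ps + q + ζℓ/k)`, and a
real quadratic has its roots in the open left half plane iff both its coefficients are positive.

For the radius, let `δ = b/a` stabilize `g`. Both `a` and `ad - bn` are Hurwitz, and a Hurwitz
polynomial has no root on `[0, ∞)`, so its value at `0` has the sign of its leading coefficient.
As `g` is strictly proper, `ad - bn` and `ad` have the same leading coefficient, which gives
`ℓ + δ(0)k > 0`, i.e. `|δ(0)| > |ℓ/k|`, while `‖δ‖_∞ ≥ |δ(0)|`. Conversely, the constant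
`δ = -(1 + η)ℓ/k` gives the characteristic polynomial `s³ + ps² + (q + (1 + η)ζℓ/k)s - ηℓ`,
which satisfies the Routh–Hurwitz conditions for small `η > 0`.
-/

open Filter Topology Bornology

theorem eval_map_ofReal (a : ℝ[X]) (t : ℝ) :
    (a.map (algebraMap ℝ ℂ)).eval (t : ℂ) = a.eval t := by
  rw [eval_map, ← Complex.coe_algebraMap, eval₂_at_apply]

theorem odd_ite_iff {P : Prop} [Decidable P] : Odd (if P then 1 else 0) ↔ P := by
  split_ifs with h <;> simp [h]

theorem odd_ite_add_iff {P : Prop} [Decidable P] {m : ℕ} :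
    Odd ((if P then 1 else 0) + m) ↔ (P ↔ ¬ Odd m) := by
  split_ifs with h <;> simp [h, Nat.odd_add]

theorem mul_pos_iff_of_ne_zero {R : Type*} [Ring R] [LinearOrder R] [IsStrictOrderedRing R]
    {x y : R} (hx : x ≠ 0) (hy : y ≠ 0) : 0 < x * y ↔ (0 < x ↔ ¬ y < 0) := by
  rw [mul_pos_iff]
  rcases hx.lt_or_gt with h | h <;> rcases hy.lt_or_gt with h' | h' <;>
    simp [h, h', h.not_gt, h'.not_gt]

namespace StableRat

variable {a : ℝ[X]}

theorem ne_zero (ha : StableRat a) : a ≠ 0 := by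
  rintro rfl
  simpa using ha 0

theorem eval_ne_zero_of_nonneg (ha : StableRat a) {t : ℝ} (ht : 0 ≤ t) : a.eval t ≠ 0 := by
  intro h
  have := ha t (by rw [eval_map_ofReal, h, Complex.ofReal_zero])
  rw [Complex.ofReal_re] at this
  linarith

theorem eval_imag_ne_zero (ha : StableRat a) (ω : ℝ) :
    (a.map (algebraMap ℝ ℂ)).eval (ω * Complex.I) ≠ 0 := fun h => by
  simpa using ha _ h

theorem eval_zero_mul_leadingCoeff_pos (ha : StableRat a) : 0 < a.eval 0 * a.leadingCoeff := by
  have hlead : a.leadingCoeff ≠ 0 := leadingCoeff_ne_zero.2 ha.ne_zero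
  rcases le_or_gt a.degree 0 with hdeg | hdeg
  · obtain ⟨c, rfl⟩ : ∃ c, a = C c := ⟨_, eq_C_of_degree_le_zero hdeg⟩
    rw [leadingCoeff_C] at hlead
    simpa using mul_self_pos.2 hlead
  · set ψ := C a.leadingCoeff * a
    have htop : Tendsto (fun x => ψ.eval x) atTop atTop :=
      tendsto_atTop_of_leadingCoeff_nonneg ψ (by rwa [degree_C_mul hlead])
        (by rw [leadingCoeff_mul, leadingCoeff_C]; exact mul_self_nonneg _)
    by_contra! h0
    obtain ⟨t, ht, hψt⟩ := intermediate_value_Ici ψ.continuous.continuousOn htop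
      (show (0 : ℝ) ∈ Set.Ici (ψ.eval 0) by simpa [ψ, mul_comm] using h0)
    exact ha.eval_ne_zero_of_nonneg ht
      ((mul_eq_zero.1 (by simpa [ψ] using hψt)).resolve_left hlead)

theorem bddAbove_norm_ratEval {b : ℝ[X]} (ha : StableRat a) (hba : b.degree ≤ a.degree) :
    BddAbove (Set.range fun ω : ℝ => ‖ratEval b a (ω * Complex.I)‖) := by
  have hI : Tendsto (fun ω : ℝ => (ω : ℂ) * Complex.I) (cobounded ℝ) (cobounded ℂ) := by
    rw [← tendsto_norm_atTop_iff_cobounded]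
    simpa only [norm_mul, Complex.norm_real, Complex.norm_I, mul_one] using
      tendsto_norm_cobounded_atTop (E := ℝ)
  obtain ⟨K, hK⟩ := ((isBigO_cobounded_of_degree_le (P := b.map (algebraMap ℝ ℂ))
    (Q := a.map (algebraMap ℝ ℂ)) (by simpa [degree_map])).comp_tendsto hI).bound
  have hcont : Continuous fun ω : ℝ => ‖ratEval b a (ω * Complex.I)‖ :=
    ((Polynomial.continuous _).comp (by fun_prop)).div
      ((Polynomial.continuous _).comp (by fun_prop)) ha.eval_imag_ne_zero |>.norm
  have hfar : ∀ᶠ ω : ℝ in cocompact ℝ, ‖ratEval b a (ω * Complex.I)‖ ≤ K := by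
    rw [← Metric.cobounded_eq_cocompact]
    filter_upwards [hK] with ω hω
    rwa [ratEval, norm_div, div_le_iff₀ (norm_pos_iff.2 (ha.eval_imag_ne_zero ω))]
  obtain ⟨T, hT, hTc⟩ := mem_cocompact.1 hfar
  obtain ⟨B, hB⟩ := hT.bddAbove_image hcont.continuousOn
  refine ⟨max B K, ?_⟩
  rintro _ ⟨ω, rfl⟩
  by_cases hω : ω ∈ T
  · exact le_max_of_le_left (hB ⟨ω, hω, rfl⟩)
  · exact le_max_of_le_right (hTc hω)

theorem abs_div_eval_zero_le_hinfNorm {b : ℝ[X]} (ha : StableRat a) (hba : b.degree ≤ a.degree) :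
    |b.eval 0 / a.eval 0| ≤ hinfNorm b a := by
  have := le_ciSup (ha.bddAbove_norm_ratEval hba) 0
  rwa [Complex.ofReal_zero, zero_mul, ratEval, ← Complex.ofReal_zero, eval_map_ofReal,
    eval_map_ofReal, ← Complex.ofReal_div, Complex.norm_real, Real.norm_eq_abs] at this

end StableRat

theorem stableRat_mul_iff {f g : ℝ[X]} : StableRat (f * g) ↔ StableRat f ∧ StableRat g := by
  simp only [StableRat, Polynomial.map_mul, eval_mul, mul_eq_zero]
  exact ⟨fun h => ⟨fun z hz => h z (.inl hz), fun z hz => h z (.inr hz)⟩,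
    fun h z => Or.rec (h.1 z) (h.2 z)⟩

theorem stableRat_X_sub_C_iff {r : ℝ} : StableRat (X - C r) ↔ r < 0 := by
  simp [StableRat, sub_eq_zero]

theorem orhpCount_mul {f g : ℝ[X]} (hfg : f * g ≠ 0) :
    orhpCount (f * g) = orhpCount f + orhpCount g := by
  rw [orhpCount, Polynomial.map_mul, roots_mul, Multiset.filter_add, Multiset.card_add]
  · rfl
  · rwa [← Polynomial.map_mul, Polynomial.map_ne_zero_iff (algebraMap ℝ ℂ).injective]

theorem orhpCount_X_sub_C (r : ℝ) : orhpCount (X - C r) = if 0 < r then 1 else 0 := by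
  simp [orhpCount, Multiset.filter_singleton, apply_ite]

theorem omegaStable_X_mul_zero_iff (Q : ℝ[X]) : OmegaStable (X * Q) 0 ↔ StableRat Q := by
  simp only [OmegaStable, Complex.ofReal_zero, zero_mul, neg_zero, ne_eq, not_true_eq_false,
    IsEmpty.forall_iff, true_and, Polynomial.map_mul, map_X, eval_mul, eval_X, mul_eq_zero]
  set Q' := Q.map (algebraMap ℝ ℂ)
  have hmult (hQ : Q' ≠ 0) : (X * Q').rootMultiplicity 0 = 1 + Q'.rootMultiplicity 0 := by
    rw [rootMultiplicity_mul (mul_ne_zero X_ne_zero hQ)]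
    simpa using rootMultiplicity_X_sub_C_self (x := (0 : ℂ))
  constructor
  · rintro ⟨hsimple, hroots⟩
    have hQ : Q' ≠ 0 := by
      rintro h
      rw [h, mul_zero, rootMultiplicity_zero] at hsimple
      exact zero_ne_one hsimple
    have h0 : ¬ Q'.IsRoot 0 := fun h =>
      hQ (rootMultiplicity_eq_zero_iff.1 (by rw [hmult hQ] at hsimple; omega) h)
    exact fun z hz => hroots z (.inr hz) (by rintro rfl; exact h0 hz) (by rintro rfl; exact h0 hz)
  · intro hQs
    have hQ : Q' ≠ 0 := (Polynomial.map_ne_zero_iff (algebraMap ℝ ℂ).injective).2 hQs.ne_zero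
    have h0 : ¬ Q'.IsRoot 0 := fun h => lt_irrefl _ (hQs 0 h)
    refine ⟨by rw [hmult hQ, rootMultiplicity_eq_zero h0], fun z hz hz0 _ => ?_⟩
    exact hQs z (hz.resolve_left hz0)

theorem map_quadratic_eq {b c : ℝ} {z w : ℂ} (hb : (b : ℂ) = -(z + w)) (hc : (c : ℂ) = z * w) :
    (X ^ 2 + C b * X + C c).map (algebraMap ℝ ℂ) = (X - C z) * (X - C w) := by
  simp only [Polynomial.map_add, Polynomial.map_mul, Polynomial.map_pow, map_X, map_C,
    Complex.coe_algebraMap, hb, hc, C_neg, C_add, C_mul]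
  ring

/-- The roots are either both real, or a conjugate pair `x ± iy`, with `x² ≤ x² + y² = c`. -/
theorem exists_quadratic_roots (b c : ℝ) :
    ∃ z w : ℂ, (X ^ 2 + C b * X + C c).map (algebraMap ℝ ℂ) = (X - C z) * (X - C w) ∧
      b = -(z.re + w.re) ∧ (c = z.re * w.re ∨ (z.re = w.re ∧ z.re ^ 2 ≤ c)) := by
  rcases le_or_gt 0 (b ^ 2 - 4 * c) with hD | hD
  · obtain ⟨s, hs⟩ : ∃ s : ℝ, s ^ 2 = b ^ 2 - 4 * c := ⟨_, Real.sq_sqrt hD⟩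
    refine ⟨((-b + s) / 2 : ℝ), ((-b - s) / 2 : ℝ), map_quadratic_eq ?_ ?_, ?_, .inl ?_⟩
    · push_cast; ring
    · have : (s : ℂ) ^ 2 = (b : ℂ) ^ 2 - 4 * c := by exact_mod_cast hs
      push_cast; linear_combination (1 / 4 : ℂ) * this
    · simp only [Complex.ofReal_re]; ring
    · simp only [Complex.ofReal_re]; linear_combination (1 / 4 : ℝ) * hs
  · obtain ⟨s, hs⟩ : ∃ s : ℝ, s ^ 2 = 4 * c - b ^ 2 := ⟨_, Real.sq_sqrt (by linarith)⟩
    refine ⟨⟨-b / 2, s / 2⟩, ⟨-b / 2, -s / 2⟩, map_quadratic_eq ?_ ?_, by ring, .inr ⟨rfl, ?_⟩⟩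
    · apply Complex.ext <;> simp <;> ring
    · apply Complex.ext <;> simp <;> nlinarith [hs]
    · nlinarith

theorem stableRat_quadratic_iff (b c : ℝ) :
    StableRat (X ^ 2 + C b * X + C c) ↔ 0 < b ∧ 0 < c := by
  obtain ⟨z, w, hmap, hb, hc⟩ := exists_quadratic_roots b c
  have hroots : StableRat (X ^ 2 + C b * X + C c) ↔ z.re < 0 ∧ w.re < 0 := by
    simp [StableRat, hmap, sub_eq_zero]
  rw [hroots]
  rcases hc with hc | ⟨hzw, hc⟩
  · constructor
    · rintro ⟨hz, hw⟩; exact ⟨by linarith, hc ▸ mul_pos_of_neg_of_neg hz hw⟩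
    · rintro ⟨hb', hc'⟩; constructor <;> nlinarith
  · constructor
    · rintro ⟨hz, hw⟩; exact ⟨by linarith, by nlinarith⟩
    · rintro ⟨hb', hc'⟩; constructor <;> linarith

theorem odd_orhpCount_quadratic_iff {b c : ℝ} (hc0 : c ≠ 0) :
    Odd (orhpCount (X ^ 2 + C b * X + C c)) ↔ c < 0 := by
  obtain ⟨z, w, hmap, -, hc⟩ := exists_quadratic_roots b c
  have hcount : orhpCount (X ^ 2 + C b * X + C c) =
      (if 0 < z.re then 1 else 0) + (if 0 < w.re then 1 else 0) := by
    rw [orhpCount, hmap, roots_mul (mul_ne_zero (X_sub_C_ne_zero z) (X_sub_C_ne_zero w)),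
      roots_X_sub_C, roots_X_sub_C, Multiset.filter_add, Multiset.card_add,
      Multiset.filter_singleton, Multiset.filter_singleton]
    split_ifs <;> rfl
  rw [hcount, odd_ite_add_iff, odd_ite_iff]
  rcases hc with rfl | ⟨hzw, hc⟩
  · rw [← neg_pos, ← mul_neg, mul_pos_iff_of_ne_zero (left_ne_zero_of_mul hc0)
      (neg_ne_zero.2 (right_ne_zero_of_mul hc0)), neg_lt_zero]
  · rw [hzw]
    exact iff_of_false iff_not_self (not_lt.2 ((sq_nonneg _).trans hc))

theorem RIR_le_hinfNorm {b a n d : ℝ[X]} (h : Stabilizes b a n d) :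
    RIR n d ≤ ENNReal.ofReal (hinfNorm b a) :=
  sInf_le ⟨b, a, h, rfl⟩

theorem hinfNorm_C_one (t : ℝ) : hinfNorm (C t) 1 = |t| := by
  simp [hinfNorm, ratEval]

theorem stabilizes_C_one_iff {t : ℝ} {n d : ℝ[X]} :
    Stabilizes (C t) 1 n d ↔ StableRat (d - C t * n) := by
  simp [Stabilizes, StableRat, degree_C_le, isCoprime_one_right]

theorem Stabilizes.zero_lt_leadingCoeff_mul {b a n d : ℝ[X]} (h : Stabilizes b a n d)
    (hnd : n.degree < d.degree) :
    0 < d.leadingCoeff * (d.eval 0 - b.eval 0 / a.eval 0 * n.eval 0) := by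
  obtain ⟨ha, -, hba, has, hchar⟩ := h
  have hφ : StableRat (a * d - b * n) := hchar
  have hlt : (b * n).degree < (a * d).degree := by
    rcases eq_or_ne b 0 with rfl | hb
    · rw [zero_mul, degree_zero, bot_lt_iff_ne_bot, Ne, degree_eq_bot]
      exact mul_ne_zero ha (ne_zero_of_degree_gt hnd)
    · rw [degree_mul, degree_mul]
      exact WithBot.add_lt_add_of_le_of_lt (degree_ne_bot.2 hb) hba hnd
  have h1 := hφ.eval_zero_mul_leadingCoeff_pos
  have h2 := has.eval_zero_mul_leadingCoeff_pos
  rw [leadingCoeff_sub_of_degree_lt hlt, leadingCoeff_mul, eval_sub, eval_mul, eval_mul] at h1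
  have ha0 : a.eval 0 ≠ 0 := by rintro h; simp [h] at h2
  have hfactor : (a.eval 0 * d.eval 0 - b.eval 0 * n.eval 0) * (a.leadingCoeff * d.leadingCoeff) =
      a.eval 0 * a.leadingCoeff *
        (d.leadingCoeff * (d.eval 0 - b.eval 0 / a.eval 0 * n.eval 0)) := by
    field_simp
  exact pos_of_mul_pos_right (hfactor ▸ h1) h2.le

theorem exists_isRoot_denom3 (p q ℓ : ℝ) : ∃ r, (denom3 p q ℓ).IsRoot r := by
  set f : ℝ → ℝ := fun x => x ^ 3 + p * x ^ 2 + q * x + ℓ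
  -- at `x = ±M` the term `x³` dominates the others
  set M := 1 + |p| + |q| + |ℓ|
  have hM1 : 1 ≤ M := by linarith [abs_nonneg p, abs_nonneg q, abs_nonneg ℓ]
  have hlow (x : ℝ) (hx : |x| = M) : |p * x ^ 2 + q * x + ℓ| < M ^ 3 := by
    have h := abs_add_three (p * x ^ 2) (q * x) ℓ
    rw [abs_mul, abs_mul, abs_pow, hx] at h
    have hq := mul_le_mul_of_nonneg_left (by nlinarith : M ≤ M ^ 2) (abs_nonneg q)
    have hℓ := mul_le_mul_of_nonneg_left (by nlinarith : 1 ≤ M ^ 2) (abs_nonneg ℓ)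
    nlinarith
  have hpos : 0 < f M := by
    have := hlow M (abs_of_pos (by linarith))
    simp only [f]
    linarith [neg_abs_le (p * M ^ 2 + q * M + ℓ)]
  have hneg : f (-M) < 0 := by
    have := hlow (-M) (by rw [abs_neg, abs_of_pos (by linarith)])
    simp only [f]
    linarith [le_abs_self (p * (-M) ^ 2 + q * (-M) + ℓ)]
  obtain ⟨r, hr⟩ := intermediate_value_univ (-M) M (by fun_prop : Continuous f) ⟨hneg.le, hpos.le⟩
  exact ⟨r, by simpa [denom3] using hr⟩

theorem denom3_eq_X_sub_C_mul {p q ℓ r : ℝ} (hr : (denom3 p q ℓ).IsRoot r) :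
    denom3 p q ℓ = (X - C r) * (X ^ 2 + C (p + r) * X + C (r ^ 2 + p * r + q)) := by
  have hℓ : ℓ = -(r * (r ^ 2 + p * r + q)) := by
    simp [denom3] at hr
    linear_combination hr
  rw [denom3, hℓ]
  simp only [C_add, C_mul, C_neg, C_pow]
  ring

theorem odd_orhpCount_denom3_iff {p q ℓ : ℝ} (hℓ : ℓ ≠ 0) :
    Odd (orhpCount (denom3 p q ℓ)) ↔ ℓ < 0 := by
  obtain ⟨r, hr⟩ := exists_isRoot_denom3 p q ℓ
  set γ := r ^ 2 + p * r + q
  have hℓr : ℓ = -(r * γ) := by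
    simp [denom3] at hr
    linear_combination hr
  have hr0 : r ≠ 0 := by rintro rfl; simp [hℓr] at hℓ
  have hγ0 : γ ≠ 0 := by intro h; simp [hℓr, h] at hℓ
  rw [denom3_eq_X_sub_C_mul hr, orhpCount_mul, orhpCount_X_sub_C, odd_ite_add_iff,
    odd_orhpCount_quadratic_iff hγ0, hℓr, neg_lt_zero, mul_pos_iff_of_ne_zero hr0 hγ0]
  exact mul_ne_zero (X_sub_C_ne_zero r) (Monic.ne_zero (by monicity!))

theorem stableRat_denom3 {p q ℓ : ℝ} (hp : 0 < p) (hℓ : 0 < ℓ) (hpq : ℓ < p * q) :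
    StableRat (denom3 p q ℓ) := by
  obtain ⟨r, hr⟩ := exists_isRoot_denom3 p q ℓ
  have hr' : r ^ 3 + p * r ^ 2 + q * r + ℓ = 0 := by simpa [denom3] using hr
  rw [denom3_eq_X_sub_C_mul hr, stableRat_mul_iff, stableRat_X_sub_C_iff, stableRat_quadratic_iff]
  have hq : 0 < q := pos_of_mul_pos_right (hℓ.trans hpq) hp.le
  have hr0 : r < 0 := by
    by_contra! h
    nlinarith [pow_nonneg h 2, pow_nonneg h 3]
  have hγ : 0 < r ^ 2 + p * r + q := by nlinarith
  exact ⟨hr0, by nlinarith, hγ⟩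

theorem denom3_sub_C_mul_numer3 (ζ k p q ℓ t : ℝ) :
    denom3 p q ℓ - C t * numer3 ζ k = denom3 p (q - t * ζ) (ℓ + t * k) := by
  simp only [denom3, numer3, C_sub, C_add, C_mul]
  ring

theorem denom3_zero (p q : ℝ) : denom3 p q 0 = X * (X ^ 2 + C p * X + C q) := by
  simp only [denom3, C_0, add_zero]
  ring

theorem abs_div_le_hinfNorm_of_stabilizes {ζ k p q ℓ : ℝ} {b a : ℝ[X]} (hk : k ≠ 0)
    (hℓ : ℓ < 0) (h : Stabilizes b a (numer3 ζ k) (denom3 p q ℓ)) :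
    |ℓ / k| ≤ hinfNorm b a := by
  have hnd : (numer3 ζ k).degree < (denom3 p q ℓ).degree := by
    have hn : (numer3 ζ k).degree ≤ 1 := by unfold numer3; compute_degree!
    have hd : (denom3 p q ℓ).degree = 3 := by unfold denom3; compute_degree!
    rw [hd]
    exact hn.trans_lt (by norm_num)
  have hlead : (denom3 p q ℓ).leadingCoeff = 1 := by unfold denom3; monicity!
  have hdc := h.zero_lt_leadingCoeff_mul hnd
  rw [hlead, one_mul, show (denom3 p q ℓ).eval 0 = ℓ by simp [denom3],
    show (numer3 ζ k).eval 0 = -k by simp [numer3]] at hdc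
  set e := b.eval 0 / a.eval 0
  have hle : |ℓ / k| ≤ |e| := by
    rw [abs_div, div_le_iff₀ (abs_pos.2 hk), ← abs_mul, abs_of_neg hℓ]
    exact (by nlinarith : -ℓ ≤ e * k).trans (le_abs_self _)
  obtain ⟨-, -, hba, has, -⟩ := h
  exact hle.trans (has.abs_div_eval_zero_le_hinfNorm hba)

theorem eventually_stabilizes_numer3_denom3 {ζ k p q ℓ : ℝ} (hk : k ≠ 0) (hp : 0 < p)
    (hℓ : ℓ < 0) (hc : 0 < q + ζ * ℓ / k) :
    ∀ᶠ η in 𝓝[>] 0, Stabilizes (C (-(ℓ / k) * (1 + η))) 1 (numer3 ζ k) (denom3 p q ℓ) := by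
  -- the Routh–Hurwitz inequality `c₀ < p c₁` is strict at `η = 0`, where `c₀ = 0`
  have hRH : ∀ᶠ η in 𝓝 (0 : ℝ), -ℓ * η < p * (q + ζ * ℓ / k * (1 + η)) :=
    ContinuousAt.eventually_lt (by fun_prop) (by fun_prop) (by simpa using mul_pos hp hc)
  filter_upwards [nhdsWithin_le_nhds hRH, self_mem_nhdsWithin] with η hη hη0
  have h0 : ℓ + -(ℓ / k) * (1 + η) * k = -ℓ * η := by field_simp; ring
  have h1 : q - -(ℓ / k) * (1 + η) * ζ = q + ζ * ℓ / k * (1 + η) := by ring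
  rw [stabilizes_C_one_iff, denom3_sub_C_mul_numer3, h0, h1]
  exact stableRat_denom3 hp (mul_pos (neg_pos.2 hℓ) hη0) hη

theorem RIR_numer3_denom3 {ζ k p q ℓ : ℝ} (hk : k ≠ 0) (hp : 0 < p) (hℓ : ℓ < 0)
    (hc : 0 < q + ζ * ℓ / k) :
    RIR (numer3 ζ k) (denom3 p q ℓ) = ENNReal.ofReal |ℓ / k| := by
  refine le_antisymm ?_ (le_sInf ?_)
  · have hlim : Tendsto (fun η : ℝ => ENNReal.ofReal |-(ℓ / k) * (1 + η)|) (𝓝[>] 0)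
        (𝓝 (ENNReal.ofReal |ℓ / k|)) := by
      have : Continuous fun η : ℝ => ENNReal.ofReal |-(ℓ / k) * (1 + η)| :=
        ENNReal.continuous_ofReal.comp (by fun_prop)
      simpa using (this.tendsto 0).mono_left nhdsWithin_le_nhds
    refine ge_of_tendsto hlim ?_
    filter_upwards [eventually_stabilizes_numer3_denom3 hk hp hℓ hc] with η hη
    rw [← hinfNorm_C_one]
    exact RIR_le_hinfNorm hη
  · rintro _ ⟨b, a, h, rfl⟩
    exact ENNReal.ofReal_le_ofReal (abs_div_le_hinfNorm_of_stabilizes hk hℓ h)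

theorem stmt7_general (ζ k p q ℓ : ℝ) (hk : k ≠ 0) (hℓ : ℓ ≠ 0) :
    ((Odd (orhpCount (denom3 p q ℓ)) ∧
        OmegaStable (denom3 p q ℓ - Polynomial.C (-ℓ / k) * numer3 ζ k) 0)
      ↔ (0 < p ∧ ℓ < 0 ∧ 0 < q + ζ * ℓ / k)) ∧
    ((0 < p ∧ ℓ < 0 ∧ 0 < q + ζ * ℓ / k) →
      RIR (numer3 ζ k) (denom3 p q ℓ) = ENNReal.ofReal |ℓ / k|) := by
  have hchar : denom3 p q ℓ - C (-ℓ / k) * numer3 ζ k =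
      X * (X ^ 2 + C p * X + C (q + ζ * ℓ / k)) := by
    rw [denom3_sub_C_mul_numer3, ← denom3_zero]
    congr 1 <;> field_simp <;> ring
  refine ⟨?_, fun ⟨hp, hℓ', hc⟩ => RIR_numer3_denom3 hk hp hℓ' hc⟩
  rw [odd_orhpCount_denom3_iff hℓ, hchar, omegaStable_X_mul_zero_iff, stableRat_quadratic_iff]
  tauto

/-- for `g(s) = (ζs − k)/(s³ + ps² + qs + ℓ)` with `k ≠ 0`, `ℓ ≠ 0`:
(A) odd number of ORHP poles and the constant perturbation `δ₀ = 1/g(0) = −ℓ/k`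
yields a characteristic polynomial with a simple root at `0` and all other roots
in the OLHP, iff (B) `p > 0`, `ℓ < 0`, `q + ζℓ/k > 0`; and under (B),
`ρ*(g) = 1/|g(0)| = |ℓ/k|`. -/
theorem stmt7 (ζ k p q ℓ : ℝ) (hk : k ≠ 0) (hℓ : ℓ ≠ 0)
    (hcop : IsCoprime (numer3 ζ k) (denom3 p q ℓ)) :
    ((Odd (orhpCount (denom3 p q ℓ)) ∧
        OmegaStable (denom3 p q ℓ - Polynomial.C (-ℓ / k) * numer3 ζ k) 0)
      ↔ (0 < p ∧ ℓ < 0 ∧ 0 < q + ζ * ℓ / k)) ∧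
    ((0 < p ∧ ℓ < 0 ∧ 0 < q + ζ * ℓ / k) →
      RIR (numer3 ζ k) (denom3 p q ℓ) = ENNReal.ofReal |ℓ / k|) :=
  stmt7_general ζ k p q ℓ hk hℓ
end
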